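/- arXiv:2308.06336 — 7 statements merged into one kernel-verified Lean document; each statement's English description precedes it below -/
import Mathlib

section
/- For simplicial complexes Σ' and Σ, the assignment sending a simplicial complex map g: Σ' → ĤNΣ to the relation π ⊆ Σ'_0 × Σ_0 with (x', x) ∈ π iff x ∈ g(x') is a bijection between the set of simplicial complex maps Σ' → ĤNΣ and the set of simplicial relations from Σ' to Σ. -/
universe u v w t

namespace Ctx

/-- An abstract simplicial complex on the vertex type `V`: a collection of
nonempty finite subsets of `V` (the simplices/faces), closed under passing to
nonempty subsets, and containing every singleton (so that `V` is exactly the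
vertex set). -/
structure SComplex (V : Type u) where
  faces : Set (Set V)
  finite_mem : ∀ σ ∈ faces, Set.Finite σ
  nonempty_mem : ∀ σ ∈ faces, Set.Nonempty σ
  down_closed : ∀ ⦃σ⦄, σ ∈ faces → ∀ ⦃τ⦄, τ ⊆ σ → τ.Nonempty → τ ∈ faces
  singleton_mem : ∀ x : V, {x} ∈ faces

namespace SComplex

variable {V : Type u} {W : Type v} {V' : Type w} {V'' : Type t}

/-- A map of simplicial complexes: a function on vertices carrying every
simplex (elementwise image) to a simplex. -/
@[ext]
structure Map (Γ : SComplex V) (K : SComplex W) where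
  toFun : V → W
  map_faces : ∀ ⦃σ⦄, σ ∈ Γ.faces → toFun '' σ ∈ K.faces

variable {Γ : SComplex V} {K : SComplex W} {K' : SComplex V'}

/-- The identity simplicial complex map. -/
protected def Map.id (K : SComplex V) : Map K K :=
  ⟨fun x => x, fun σ h => by simpa using h⟩

/-- Composition of simplicial complex maps. -/
def Map.comp {L : SComplex V'} (g : Map K L) (f : Map Γ K) : Map Γ L :=
  ⟨g.toFun ∘ f.toFun, fun σ h => by
    rw [Set.image_comp]; exact g.map_faces (f.map_faces h)⟩

/-- The star of a simplex: all simplices containing it. -/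
def star (K : SComplex V) (σ : Set V) : Set (Set V) := {τ | τ ∈ K.faces ∧ σ ⊆ τ}

/-- Surjectivity: every simplex of the target is an image of a simplex. -/
def Map.Surj (f : Map Γ K) : Prop := ∀ σ ∈ K.faces, ∃ γ ∈ Γ.faces, f.toFun '' γ = σ

/-- Local surjectivity: stars surject onto stars. -/
def Map.LocSurj (f : Map Γ K) : Prop :=
  ∀ γ ∈ Γ.faces, ∀ τ ∈ K.star (f.toFun '' γ), ∃ γ' ∈ Γ.star γ, f.toFun '' γ' = τ

/-- Discreteness over vertices: no edge between distinct vertices with the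
same image. -/
def Map.DiscV (f : Map Γ K) : Prop :=
  ∀ x y : V, x ≠ y → f.toFun x = f.toFun y → ({x, y} : Set V) ∉ Γ.faces

/-- A bundle scenario: a surjective, locally surjective simplicial complex map
that is discrete over vertices. -/
def Map.IsBundle (f : Map Γ K) : Prop := f.Surj ∧ f.LocSurj ∧ f.DiscV

/-- `f` has the right lifting property with respect to `g`. -/
def RLP {A : Type*} {B : Type*} {CA : SComplex A} {CB : SComplex B}
    (g : Map CA CB) (f : Map Γ K) : Prop :=
  ∀ (u : Map CA Γ) (v : Map CB K), f.comp u = v.comp g →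
    ∃ h : Map CB Γ, h.comp g = u ∧ f.comp h = v

/-- The full simplicial complex `Δ^n` on `{0, …, n}`. -/
def deltaC (n : ℕ) : SComplex (Fin (n + 1)) where
  faces := {σ | σ.Nonempty}
  finite_mem := fun σ _ => σ.toFinite
  nonempty_mem := fun _ h => h
  down_closed := fun _ _ _ _ h => h
  singleton_mem := fun x => Set.singleton_nonempty x

/-- The simplicial complex map `Δ^m → Δ^n` induced by a function
`{0,…,m} → {0,…,n}`. -/
def deltaMap {m n : ℕ} (θ : Fin (m + 1) → Fin (n + 1)) : Map (deltaC m) (deltaC n) :=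
  ⟨θ, fun _ h => h.image θ⟩

/-- The empty simplicial complex. -/
def emptyC : SComplex Empty where
  faces := ∅
  finite_mem := fun _ h => h.elim
  nonempty_mem := fun _ h => h.elim
  down_closed := fun _ h => h.elim
  singleton_mem := fun x => x.elim

/-- The inclusion of the empty simplicial complex into `Δ^n`. -/
def emptyToDelta (n : ℕ) : Map emptyC (deltaC n) :=
  ⟨fun x => x.elim, fun _ h => h.elim⟩

/-- The type of faces of a simplicial complex. -/
abbrev Face (K : SComplex V) : Type u := {σ : Set V // σ ∈ K.faces}

/-- The nerve complex `ĤN K`: vertices are the simplices of `K`, and a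
nonempty finite set of simplices is a face iff its union is a face of `K`. -/
def nerveC (K : SComplex V) : SComplex K.Face where
  faces := {τ | τ.Finite ∧ τ.Nonempty ∧ (⋃ σ ∈ τ, (σ : Set V)) ∈ K.faces}
  finite_mem := fun _ h => h.1
  nonempty_mem := fun _ h => h.2.1
  down_closed := by
    intro τ h τ' hsub hne
    refine ⟨h.1.subset hsub, hne, K.down_closed h.2.2 ?_ ?_⟩
    · exact Set.biUnion_subset_biUnion_left hsub
    · obtain ⟨σ, hσ⟩ := hne
      obtain ⟨x, hx⟩ := K.nonempty_mem σ.1 σ.2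
      exact ⟨x, Set.mem_biUnion hσ hx⟩
  singleton_mem := fun σ => ⟨Set.finite_singleton σ, Set.singleton_nonempty σ, by
    simpa using σ.2⟩

/-- The map `ĤN f` induced on nerve complexes. -/
def nerveMap (f : Map Γ K) : Map (nerveC Γ) (nerveC K) where
  toFun γ := ⟨f.toFun '' γ.1, f.map_faces γ.2⟩
  map_faces := by
    intro τ hτ
    refine ⟨hτ.1.image _, hτ.2.1.image _, ?_⟩
    have h : (⋃ σ ∈ (fun γ : Γ.Face => (⟨f.toFun '' γ.1, f.map_faces γ.2⟩ : K.Face)) '' τ,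
        (σ : Set W)) = f.toFun '' (⋃ σ ∈ τ, (σ : Set V)) := by
      rw [Set.biUnion_image, Set.image_iUnion₂]
    exact Set.mem_of_eq_of_mem h (f.map_faces hτ.2.2)

/-- The unit `δ : K → ĤN K`, sending a vertex to the singleton simplex. -/
def deltaHat (K : SComplex V) : Map K (nerveC K) where
  toFun x := ⟨{x}, K.singleton_mem x⟩
  map_faces := by
    intro σ hσ
    refine ⟨(K.finite_mem σ hσ).image _, (K.nonempty_mem σ hσ).image _, ?_⟩
    have h : (⋃ τ ∈ (fun x : V => (⟨{x}, K.singleton_mem x⟩ : K.Face)) '' σ,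
        (τ : Set V)) = σ := by
      rw [Set.biUnion_image]
      exact Set.biUnion_of_singleton σ
    exact Set.mem_of_eq_of_mem h hσ

/-- The multiplication `μ : ĤN (ĤN K) → ĤN K` of the nerve complex monad,
sending a set of simplices to its union. -/
def muMap (K : SComplex V) : Map (nerveC (nerveC K)) (nerveC K) where
  toFun τ := ⟨⋃ σ ∈ τ.1, (σ : Set V), τ.2.2.2⟩
  map_faces := by
    intro T hT
    refine ⟨hT.1.image _, hT.2.1.image _, ?_⟩
    have h : (⋃ σ ∈ (fun τ : (nerveC K).Face =>
          (⟨⋃ σ ∈ τ.1, (σ : Set V), τ.2.2.2⟩ : K.Face)) '' T, (σ : Set V))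
        = ⋃ σ ∈ (⋃ τ ∈ T, (τ : Set K.Face)), (σ : Set V) := by
      rw [Set.biUnion_image]
      ext x
      simp only [Set.mem_iUnion, Set.mem_setOf_eq]
      tauto
    exact Set.mem_of_eq_of_mem h hT.2.2.2.2

/-- The vertex type of the pull-back of `f : Γ → K` along `π : K' → K`. -/
def PB {Γ : SComplex V} {K : SComplex W} {K' : SComplex V'} (f : Map Γ K) (π : Map K' K) :
    Type (max u w) :=
  {q : V × V' // f.toFun q.1 = π.toFun q.2}

/-- The pull-back of `f : Γ → K` along `π : K' → K`: vertices are pairs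
`(x, y)` with `f x = π y`, and a set of pairs is a simplex iff both coordinate
projections are simplices. -/
def pullback {Γ : SComplex V} {K : SComplex W} {K' : SComplex V'} (f : Map Γ K) (π : Map K' K) :
    SComplex (PB f π) where
  faces := {τ | ((fun q : PB f π => q.1.1) '' τ) ∈ Γ.faces ∧
    ((fun q : PB f π => q.1.2) '' τ) ∈ K'.faces}
  finite_mem := by
    intro τ h
    have h1 : (Subtype.val '' τ).Finite := by
      refine Set.Finite.subset (Set.Finite.prod (Γ.finite_mem _ h.1) (K'.finite_mem _ h.2)) ?_
      rintro q ⟨r, hr, rfl⟩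
      exact ⟨⟨r, hr, rfl⟩, ⟨r, hr, rfl⟩⟩
    exact Set.Finite.of_finite_image h1 Subtype.val_injective.injOn
  nonempty_mem := fun τ h => Set.Nonempty.of_image (Γ.nonempty_mem _ h.1)
  down_closed := fun τ h τ' hsub hne =>
    ⟨Γ.down_closed h.1 (Set.image_mono hsub) (hne.image _),
     K'.down_closed h.2 (Set.image_mono hsub) (hne.image _)⟩
  singleton_mem := fun q => by
    constructor
    · simpa using Γ.singleton_mem q.1.1
    · simpa using K'.singleton_mem q.1.2

/-- First projection of the pull-back. -/
def pbFst {Γ : SComplex V} {K : SComplex W} {K' : SComplex V'} (f : Map Γ K) (π : Map K' K) :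
    Map (pullback f π) Γ :=
  ⟨fun q => q.1.1, fun _ h => h.1⟩

/-- Second projection of the pull-back (the pulled-back bundle). -/
def pbSnd {Γ : SComplex V} {K : SComplex W} {K' : SComplex V'} (f : Map Γ K) (π : Map K' K) :
    Map (pullback f π) K' :=
  ⟨fun q => q.1.2, fun _ h => h.2⟩

/-- The event complex `E_O K` of a scenario `(K, O)`: vertices are pairs
`(x, o)` with `o ∈ O x`, and simplices are graphs of outcome assignments over
simplices of `K`. -/
def eventComplex (K : SComplex V) (O : V → Type v) : SComplex ((x : V) × O x) where
  faces := {τ | (Sigma.fst '' τ) ∈ K.faces ∧ Set.InjOn Sigma.fst τ}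
  finite_mem := fun _ h => Set.Finite.of_finite_image (K.finite_mem _ h.1) h.2
  nonempty_mem := fun _ h => Set.Nonempty.of_image (K.nonempty_mem _ h.1)
  down_closed := fun τ h τ' hsub hne =>
    ⟨K.down_closed h.1 (Set.image_mono hsub) (hne.image _), h.2.mono hsub⟩
  singleton_mem := fun p => ⟨by simpa using K.singleton_mem p.1, Set.injOn_singleton _ _⟩

/-- The canonical projection `E_O K → K` of a scenario. -/
def eventProj (K : SComplex V) (O : V → Type v) : Map (eventComplex K O) K :=
  ⟨Sigma.fst, fun _ h => h.1⟩

end SComplex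

open SComplex

/-- `R`-distributions on a set `U`: finitely supported `R`-valued functions
summing to `1`. -/
def Dist (R : Type u) [CommSemiring R] (U : Type v) : Type (max u v) :=
  {p : U →₀ R // p.sum (fun _ r => r) = 1}

/-- Push-forward of distributions along a function. -/
noncomputable def Dist.map {R : Type u} [CommSemiring R] {U : Type v} {U' : Type w} (g : U → U')
    (p : Dist R U) : Dist R U' :=
  ⟨Finsupp.mapDomain g p.1, by
    rw [Finsupp.sum_mapDomain_index (fun _ => rfl) (fun _ _ _ => rfl)]
    exact p.2⟩

/-- The Dirac distribution at a point. -/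
noncomputable def Dist.pure {R : Type u} [CommSemiring R] {U : Type v} (u : U) : Dist R U :=
  ⟨Finsupp.single u 1, by rw [Finsupp.sum_single_index rfl]⟩

namespace SComplex

/-- The fiber of a simplicial complex map over a simplex of the target. -/
abbrev Map.fiber {Γ : SComplex V} {K : SComplex W} (f : Map Γ K) (σ : Set W) : Type u :=
  {γ : Set V // γ ∈ Γ.faces ∧ f.toFun '' γ = σ}

/-- The restriction map between fibers, sending `γ` over `σ` to the
subsimplex of `γ` lying over `σ' ⊆ σ`.  (For bundle scenarios this is the
unique such subsimplex.) -/
def Map.resFiber {Γ : SComplex V} {K : SComplex W} (f : Map Γ K) {σ σ' : Set W}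
    (hσ' : σ' ∈ K.faces) (h : σ' ⊆ σ) (γ : f.fiber σ) : f.fiber σ' := by
  have hne : ({y | y ∈ γ.1 ∧ f.toFun y ∈ σ'} : Set V).Nonempty := by
    obtain ⟨x, hx⟩ := K.nonempty_mem σ' hσ'
    have hx' : x ∈ f.toFun '' γ.1 := (Set.ext_iff.mp γ.2.2 x).mpr (h hx)
    obtain ⟨y, hy, rfl⟩ := hx'
    exact ⟨y, hy, hx⟩
  refine ⟨{y | y ∈ γ.1 ∧ f.toFun y ∈ σ'},
    Γ.down_closed γ.2.1 (fun y hy => hy.1) hne, ?_⟩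
  ext x
  constructor
  · rintro ⟨y, ⟨hy, hfy⟩, rfl⟩
    exact hfy
  · intro hx
    have hx' : x ∈ f.toFun '' γ.1 := (Set.ext_iff.mp γ.2.2 x).mpr (h hx)
    obtain ⟨y, hy, rfl⟩ := hx'
    exact ⟨y, ⟨hy, hx⟩, rfl⟩

/-- An empirical model on a bundle scenario `f : Γ → K`: a compatible family
of distributions on the fibers of `f`. -/
structure EmpiricalModel (R : Type t) [CommSemiring R] {Γ : SComplex V} {K : SComplex W}
    (f : Map Γ K) where
  dist : ∀ σ, σ ∈ K.faces → Dist R (f.fiber σ)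
  compat : ∀ σ (hσ : σ ∈ K.faces) σ' (hσ' : σ' ∈ K.faces) (h : σ' ⊆ σ),
    Dist.map (f.resFiber hσ' h) (dist σ hσ) = dist σ' hσ'

/-- An empirical model on a scenario `(K, O)`: a compatible family of
distributions on joint outcome assignments over each measurement context. -/
structure ScenEmp (R : Type t) [CommSemiring R] (K : SComplex V) (O : V → Type v) where
  dist : ∀ σ, σ ∈ K.faces → Dist R (∀ x : σ, O x.1)
  compat : ∀ σ (hσ : σ ∈ K.faces) σ' (hσ' : σ' ∈ K.faces) (h : σ' ⊆ σ),
    Dist.map (fun (s : ∀ x : σ, O x.1) (x : σ') => s ⟨x.1, h x.2⟩) (dist σ hσ) = dist σ' hσ'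

end SComplex

namespace SComplex

variable {V : Type u} {W : Type v} {V' : Type w}


/-- The defining property of the push-forward `π_* p` of an empirical model
`p` on `f` along a simplicial relation `π : K' → ĤN K` (a simplicial complex
map into the nerve complex): over a simplex `σ'` of `K'`, the value at a fiber
element `γ'` of the pulled-back bundle is the value of `p` over the union
`π̄(σ')` at the union of the first components of `γ'`. -/
def piPushSpec {Γ : SComplex V} {K : SComplex W} {K' : SComplex V'}
    (f : Map Γ K) (π : Map K' (nerveC K)) {R : Type t} [CommSemiring R]
    (p : EmpiricalModel R f) (q : EmpiricalModel R (pbSnd (nerveMap f) π)) : Prop :=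
  ∀ σ' (hσ' : σ' ∈ K'.faces) (γ' : (pbSnd (nerveMap f) π).fiber σ')
    (hu : (⋃ x' ∈ σ', ((π.toFun x' : K.Face) : Set W)) ∈ K.faces)
    (γ : f.fiber (⋃ x' ∈ σ', ((π.toFun x' : K.Face) : Set W))),
    (γ : Set V) = (⋃ r ∈ γ'.1, ((r.1.1 : Γ.Face) : Set V)) →
    (q.dist σ' hσ').1 γ' = (p.dist _ hu).1 γ

/-- The fiber element of the event bundle given by the graph of an outcome
assignment `s` over a simplex `σ`. -/
def graphFiber (K : SComplex V) (O : V → Type v) {σ : Set V} (hσ : σ ∈ K.faces)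
    (s : ∀ x : σ, O x.1) : (eventProj K O).fiber σ := by
  refine ⟨{p : (x : V) × O x | ∃ h : p.1 ∈ σ, p.2 = s ⟨p.1, h⟩}, ⟨?_, ?_⟩, ?_⟩
  · have h : Sigma.fst '' {p : (x : V) × O x | ∃ h : p.1 ∈ σ, p.2 = s ⟨p.1, h⟩} = σ := by
      ext x
      constructor
      · rintro ⟨p, ⟨hp, _⟩, rfl⟩; exact hp
      · intro hx; exact ⟨⟨x, s ⟨x, hx⟩⟩, ⟨hx, rfl⟩, rfl⟩
    exact Set.mem_of_eq_of_mem h hσ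
  · rintro ⟨x₁, o₁⟩ ⟨h₁, ho₁⟩ ⟨x₂, o₂⟩ ⟨h₂, ho₂⟩ hx
    obtain rfl : x₁ = x₂ := hx
    exact congrArg (Sigma.mk x₁) (ho₁.trans ho₂.symm)
  · ext x
    constructor
    · rintro ⟨p, ⟨hp, _⟩, rfl⟩; exact hp
    · intro hx; exact ⟨⟨x, s ⟨x, hx⟩⟩, ⟨hx, rfl⟩, rfl⟩

/-- Push-forward of a fiber element along a map over the base. -/
def pushFiber {Γ : SComplex V} {Γ' : SComplex V'} {K : SComplex W}
    (f : Map Γ K) (g : Map Γ' K) (α : Map Γ Γ') (hc : g.comp α = f) (σ : Set W)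
    (γ : f.fiber σ) : g.fiber σ := by
  refine ⟨α.toFun '' γ.1, α.map_faces γ.2.1, ?_⟩
  rw [← Set.image_comp]
  have h : g.toFun ∘ α.toFun = f.toFun := congrArg Map.toFun hc
  rw [h]
  exact γ.2.2

/-- Sections of a bundle scenario. -/
def BSection {Γ : SComplex V} {K : SComplex W} (f : Map Γ K) : Type _ :=
  {s : Map K Γ // f.comp s = Map.id K}

/-- Evaluation of a section of a bundle scenario at a simplex of the base,
giving an element of the fiber. -/
def BSection.ev {Γ : SComplex V} {K : SComplex W} (f : Map Γ K) (σ : Set W)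
    (hσ : σ ∈ K.faces) (s : BSection f) : f.fiber σ := by
  refine ⟨s.1.toFun '' σ, s.1.map_faces hσ, ?_⟩
  rw [← Set.image_comp]
  have h : f.toFun ∘ s.1.toFun = fun x => x := congrArg Map.toFun s.2
  rw [h, Set.image_id']

/-- Noncontextuality of an empirical model on a bundle scenario: it is a
mixture of deterministic models coming from sections. -/
def BundleNC (R : Type t) [CommSemiring R] {Γ : SComplex V} {K : SComplex W}
    (f : Map Γ K) (p : EmpiricalModel R f) : Prop :=
  ∃ d : Dist R (BSection f), ∀ σ (hσ : σ ∈ K.faces),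
    p.dist σ hσ = Dist.map (BSection.ev f σ hσ) d

/-- Noncontextuality of an empirical model on a scenario `(K, O)`: it is a
mixture of deterministic models coming from global outcome assignments. -/
def ScenNC (R : Type t) [CommSemiring R] (K : SComplex V) (O : V → Type v)
    (e : ScenEmp R K O) : Prop :=
  ∃ d : Dist R (∀ x : V, O x), ∀ σ (hσ : σ ∈ K.faces),
    e.dist σ hσ = Dist.map (fun (g : ∀ x : V, O x) (x : σ) => g x.1) d

end SComplex

end Ctx

/-! A map `g : K' → ĤN K` is the same datum as the relation `x ∈ g x'`; the union of the
simplices `g x'` over `x' ∈ σ'` is the image `π(σ')` of the relation, so the face condition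
of the nerve on `g '' σ'` is literally the condition that `π` is simplicial on `σ'`. -/

lemma SetRel.image_eq_biUnion_image_singleton {α β : Type*} (π : SetRel α β) (s : Set α) :
    π.image s = ⋃ a ∈ s, π.image {a} := by
  ext b
  simp

namespace Ctx

namespace SComplex

variable {V' : Type w} {V : Type u} {K' : SComplex V'} {K : SComplex V}

def IsSimplicialRel (K' : SComplex V') (K : SComplex V) (π : SetRel V' V) : Prop :=
  ∀ σ' ∈ K'.faces, π.image σ' ∈ K.faces

lemma image_mem_nerveC_faces_iff {φ : V' → K.Face} {σ' : Set V'} (hfin : σ'.Finite)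
    (hne : σ'.Nonempty) : φ '' σ' ∈ (nerveC K).faces ↔ (⋃ x' ∈ σ', (φ x' : Set V)) ∈ K.faces := by
  simp only [nerveC, Set.mem_ofPred_eq, Set.biUnion_image, hfin.image φ, hne.image φ, true_and]

def Map.toRel (g : Map K' (nerveC K)) : SetRel V' V := {q | q.2 ∈ (g.toFun q.1 : Set V)}

lemma Map.image_toRel (g : Map K' (nerveC K)) (σ' : Set V') :
    g.toRel.image σ' = ⋃ x' ∈ σ', (g.toFun x' : Set V) := by
  ext x
  simp [Map.toRel]

lemma Map.isSimplicialRel_toRel (g : Map K' (nerveC K)) : IsSimplicialRel K' K g.toRel := by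
  intro σ' hσ'
  rw [g.image_toRel]
  exact (image_mem_nerveC_faces_iff (K'.finite_mem σ' hσ') (K'.nonempty_mem σ' hσ')).1
    (g.map_faces hσ')

lemma Map.toRel_injective : Function.Injective (Map.toRel : Map K' (nerveC K) → SetRel V' V) :=
  fun _ _ h => Map.ext (funext fun x' => Subtype.ext (Set.ext fun x => Set.ext_iff.mp h (x', x)))

def IsSimplicialRel.toMap {π : SetRel V' V} (hπ : IsSimplicialRel K' K π) :
    Map K' (nerveC K) where
  toFun x' := ⟨π.image {x'}, hπ {x'} (K'.singleton_mem x')⟩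
  map_faces σ' hσ' := by
    rw [image_mem_nerveC_faces_iff (K'.finite_mem σ' hσ') (K'.nonempty_mem σ' hσ'),
      ← π.image_eq_biUnion_image_singleton]
    exact hπ σ' hσ'

lemma IsSimplicialRel.toRel_toMap {π : SetRel V' V} (hπ : IsSimplicialRel K' K π) :
    hπ.toMap.toRel = π := by
  ext ⟨x', x⟩
  simp [Map.toRel, IsSimplicialRel.toMap]

end SComplex

open SComplex

/-- simplicial complex maps `K' → ĤN K` biject with simplicial
relations from `K'` to `K`. -/
theorem statement_1 {V' : Type w} {V : Type u} (K' : SComplex V') (K : SComplex V) :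
    Set.BijOn (fun g : Map K' (nerveC K) => {q : V' × V | q.2 ∈ (g.toFun q.1 : Set V)})
      Set.univ
      {π : Set (V' × V) | ∀ σ' ∈ K'.faces, {x | ∃ x' ∈ σ', (x', x) ∈ π} ∈ K.faces} :=
  ⟨fun g _ => g.isSimplicialRel_toRel, fun _ _ _ _ h => Map.toRel_injective h,
    fun _ hπ => ⟨IsSimplicialRel.toMap hπ, Set.mem_univ _, IsSimplicialRel.toRel_toMap hπ⟩⟩

end Ctx
end

section
/- If f: Γ → Σ is a bundle scenario and π: Σ' → Σ is any simplicial complex map, then the projection f̃: π*(Γ) → Σ', (x, y) ↦ y, is a bundle scenario. -/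
universe u v w t

/-! A simplex of the pull-back over a simplex `τ` of `K'` is obtained as the "box" of all
pairs `(x, y)` with `x ∈ δ` and `y ∈ τ`, where `δ` is a simplex of `Γ` covering `π(τ)`; so
(local) surjectivity of `f` transfers to the pull-back. Two vertices of the pull-back over the
same `y` have first coordinates over the same `π y`, so discreteness transfers as well. -/

namespace Ctx.SComplex

variable {V : Type u} {W : Type v} {V' : Type w}
  {Γ : SComplex V} {K : SComplex W} {K' : SComplex V'}

variable (f : Map Γ K) (π : Map K' K)

def pullbackBox (δ : Set V) (τ : Set V') : Set (PB f π) :=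
  {q | q.1.1 ∈ δ ∧ q.1.2 ∈ τ}

variable {f π}

theorem image_pbFst_pullbackBox_subset (δ : Set V) (τ : Set V') :
    (pbFst f π).toFun '' pullbackBox f π δ τ ⊆ δ := by
  rintro x ⟨q, hq, rfl⟩
  exact hq.1

theorem image_pbSnd_pullbackBox {δ : Set V} {τ : Set V'}
    (h : π.toFun '' τ ⊆ f.toFun '' δ) : (pbSnd f π).toFun '' pullbackBox f π δ τ = τ := by
  refine Set.Subset.antisymm (by rintro y ⟨q, hq, rfl⟩; exact hq.2) fun y hy => ?_
  obtain ⟨x, hx, hxy⟩ := h ⟨y, hy, rfl⟩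
  exact ⟨⟨(x, y), hxy⟩, ⟨hx, hy⟩, rfl⟩

theorem pullbackBox_mem_faces {δ : Set V} {τ : Set V'} (hδ : δ ∈ Γ.faces) (hτ : τ ∈ K'.faces)
    (h : π.toFun '' τ ⊆ f.toFun '' δ) : pullbackBox f π δ τ ∈ (pullback f π).faces := by
  have hsnd := image_pbSnd_pullbackBox h
  have hne : (pullbackBox f π δ τ).Nonempty :=
    .of_image (hsnd.symm ▸ K'.nonempty_mem τ hτ)
  exact ⟨Γ.down_closed hδ (image_pbFst_pullbackBox_subset δ τ) (hne.image _),
    Set.mem_of_eq_of_mem hsnd hτ⟩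

theorem image_image_pbFst_eq_image_image_pbSnd (γ : Set (PB f π)) :
    f.toFun '' ((pbFst f π).toFun '' γ) = π.toFun '' ((pbSnd f π).toFun '' γ) := by
  rw [Set.image_image, Set.image_image]
  exact Set.image_congr fun q _ => q.2

variable (π)

theorem Map.Surj.pbSnd (hf : f.Surj) : (pbSnd f π).Surj := by
  intro τ hτ
  obtain ⟨δ, hδ, hfδ⟩ := hf _ (π.map_faces hτ)
  exact ⟨pullbackBox f π δ τ, pullbackBox_mem_faces hδ hτ hfδ.ge,
    image_pbSnd_pullbackBox hfδ.ge⟩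

theorem Map.LocSurj.pbSnd (hf : f.LocSurj) : (pbSnd f π).LocSurj := by
  rintro γ hγ τ ⟨hτ, hγτ⟩
  have hπτ : π.toFun '' τ ∈ K.star (f.toFun '' ((pbFst f π).toFun '' γ)) :=
    ⟨π.map_faces hτ, image_image_pbFst_eq_image_image_pbSnd γ ▸ Set.image_mono hγτ⟩
  obtain ⟨δ, ⟨hδ, hγδ⟩, hfδ⟩ := hf _ ((pbFst f π).map_faces hγ) _ hπτ
  refine ⟨pullbackBox f π δ τ, ⟨pullbackBox_mem_faces hδ hτ hfδ.ge, ?_⟩,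
    image_pbSnd_pullbackBox hfδ.ge⟩
  exact fun q hq => ⟨hγδ ⟨q, hq, rfl⟩, hγτ ⟨q, hq, rfl⟩⟩

theorem Map.DiscV.pbSnd (hf : f.DiscV) : (pbSnd f π).DiscV := by
  intro p q hpq hpq₂ hface
  have hpq₁ : p.1.1 ≠ q.1.1 := fun h => hpq (Subtype.ext (Prod.ext h hpq₂))
  have hfpq : f.toFun p.1.1 = f.toFun q.1.1 := by
    rw [p.2, q.2]
    exact congrArg π.toFun hpq₂
  have hpair := (pbFst f π).map_faces hface
  rw [Set.image_pair] at hpair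
  exact hf _ _ hpq₁ hfpq hpair

end Ctx.SComplex

namespace Ctx
open SComplex

/-- the pull-back of a bundle scenario along any simplicial
complex map is a bundle scenario. -/
theorem statement_2 {V : Type u} {W : Type v} {V' : Type w}
    {Γ : SComplex V} {K : SComplex W} {K' : SComplex V'}
    (f : Map Γ K) (π : Map K' K) (hf : f.IsBundle) : (pbSnd f π).IsBundle :=
  ⟨hf.1.pbSnd π, hf.2.1.pbSnd π, hf.2.2.pbSnd π⟩

end Ctx
end

section
/- If f: Γ → Σ is a bundle scenario, then the induced map on nerve complexes ĤNf: ĤNΓ → ĤNΣ, γ ↦ f(γ), is a bundle scenario. -/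
universe u v w t

/-!
A simplex of `ĤN Γ` lying over a family `τ` of simplices of `K` is the same as a simplex of `Γ`
lying over `⋃ τ`, cut into its restrictions to the members of `τ`. Surjectivity and local
surjectivity of `ĤN f` therefore reduce to those of `f`, applied to unions. For discreteness, if
two simplices of `Γ` have the same image and together span a simplex, a vertex of one and the
vertex of the other over the same point would form an edge collapsed by `f`, so they coincide.
-/

namespace Ctx.SComplex

variable {V : Type u} {W : Type v} {Γ : SComplex V} {K : SComplex W} (f : Map Γ K)

theorem biUnion_image_nerveMap (τ : Set Γ.Face) :
    (⋃ σ ∈ (nerveMap f).toFun '' τ, (σ : Set W)) = f.toFun '' ⋃ γ ∈ τ, (γ : Set V) := by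
  rw [Set.biUnion_image, Set.image_iUnion₂]
  rfl

theorem Map.exists_nerveC_face_of_fiber {τ : Set K.Face} (hfin : τ.Finite) (hne : τ.Nonempty)
    (G : f.fiber (⋃ σ ∈ τ, (σ : Set W))) :
    ∃ S ∈ (nerveC Γ).faces, (⋃ γ ∈ S, (γ : Set V)) = G.1 ∧ (nerveMap f).toFun '' S = τ := by
  have hsub (σ : τ) : (σ : Set W) ⊆ ⋃ σ ∈ τ, (σ : Set W) := Set.subset_biUnion_of_mem σ.2
  let piece (σ : τ) : Γ.Face :=
    ⟨(f.resFiber σ.1.2 (hsub σ) G).1, (f.resFiber σ.1.2 (hsub σ) G).2.1⟩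
  have : Finite τ := hfin.to_subtype
  have : Nonempty τ := hne.to_subtype
  have hunion : (⋃ γ ∈ Set.range piece, (γ : Set V)) = G.1 := by
    ext y
    simp only [Set.biUnion_range, Set.mem_iUnion]
    refine ⟨fun ⟨_, hy⟩ => hy.1, fun hy => ?_⟩
    have hfy : f.toFun y ∈ ⋃ σ ∈ τ, (σ : Set W) := G.2.2 ▸ Set.mem_image_of_mem f.toFun hy
    obtain ⟨σ, hσ, hfy⟩ : ∃ σ ∈ τ, f.toFun y ∈ (σ : Set W) := by
      simpa only [Set.mem_iUnion, exists_prop] using hfy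
    exact ⟨⟨σ, hσ⟩, hy, hfy⟩
  refine ⟨Set.range piece, ⟨Set.finite_range piece, Set.range_nonempty piece, ?_⟩, hunion, ?_⟩
  · exact hunion ▸ G.2.1
  · rw [← Set.range_comp]
    convert Subtype.range_val
    funext σ
    exact Subtype.ext (f.resFiber σ.1.2 (hsub σ) G).2.2

variable {f}

theorem Map.Surj.nerveMap (hf : f.Surj) : (SComplex.nerveMap f).Surj := by
  rintro τ ⟨hfin, hne, hτ⟩
  obtain ⟨γ, hγ, hγτ⟩ := hf _ hτ
  obtain ⟨S, hS, -, hSτ⟩ := f.exists_nerveC_face_of_fiber hfin hne ⟨γ, hγ, hγτ⟩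
  exact ⟨S, hS, hSτ⟩

theorem Map.LocSurj.nerveMap (hf : f.LocSurj) : (SComplex.nerveMap f).LocSurj := by
  rintro τ ⟨hfin, hne, hτ⟩ T ⟨⟨hTfin, hTne, hT⟩, hτT⟩
  have himage : f.toFun '' (⋃ γ ∈ τ, (γ : Set V)) ⊆ ⋃ σ ∈ T, (σ : Set W) := by
    rw [← biUnion_image_nerveMap]
    exact Set.biUnion_subset_biUnion_left hτT
  obtain ⟨γ, ⟨hγ, hτγ⟩, hγT⟩ := hf _ hτ _ ⟨hT, himage⟩
  obtain ⟨S, ⟨hSfin, -⟩, hSγ, hST⟩ := f.exists_nerveC_face_of_fiber hTfin hTne ⟨γ, hγ, hγT⟩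
  -- `S` need not contain `τ`, but adding `τ` changes neither the union `γ` nor the image `T`
  have hunion : (⋃ γ ∈ τ ∪ S, (γ : Set V)) = γ := by
    rw [Set.biUnion_union, hSγ, Set.union_eq_self_of_subset_left hτγ]
  refine ⟨τ ∪ S, ⟨⟨hfin.union hSfin, hne.mono Set.subset_union_left, hunion ▸ hγ⟩,
    Set.subset_union_left⟩, ?_⟩
  rw [Set.image_union, hST, Set.union_eq_self_of_subset_left hτT]

theorem Map.DiscV.subset_of_image_subset (hf : f.DiscV) {γ γ' : Set V}
    (hγγ' : γ ∪ γ' ∈ Γ.faces) (himage : f.toFun '' γ ⊆ f.toFun '' γ') : γ ⊆ γ' := by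
  intro x hx
  obtain ⟨y, hy, hxy⟩ := himage (Set.mem_image_of_mem _ hx)
  by_contra hx'
  have hne : x ≠ y := fun h => hx' (h ▸ hy)
  refine hf x y hne hxy.symm (Γ.down_closed hγγ' ?_ (Set.insert_nonempty x {y}))
  exact Set.insert_subset (Or.inl hx) (Set.singleton_subset_iff.mpr (Or.inr hy))

theorem Map.DiscV.nerveMap (hf : f.DiscV) : (SComplex.nerveMap f).DiscV := by
  intro γ γ' hne himage hface
  have hunion : (γ : Set V) ∪ γ' ∈ Γ.faces := by
    simpa only [Set.biUnion_pair] using hface.2.2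
  have himage' : f.toFun '' (γ : Set V) = f.toFun '' γ' := congrArg Subtype.val himage
  refine hne (Subtype.ext (subset_antisymm ?_ ?_))
  · exact hf.subset_of_image_subset hunion himage'.le
  · exact hf.subset_of_image_subset (Set.union_comm (γ : Set V) γ' ▸ hunion) himage'.ge

end Ctx.SComplex

namespace Ctx
open SComplex

/-- the nerve complex map `ĤN f` of a bundle scenario is a
bundle scenario. -/
theorem statement_3 {V : Type u} {W : Type v} {Γ : SComplex V} {K : SComplex W}
    (f : Map Γ K) (hf : f.IsBundle) : (nerveMap f).IsBundle :=
  ⟨hf.1.nerveMap, hf.2.1.nerveMap, hf.2.2.nerveMap⟩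

end Ctx
end

section
/- For a simplicial complex map f: Γ → Σ, the following are equivalent: (1) f is locally surjective; (2) f has the right lifting property with respect to every injective simplicial complex map Δ^m ↪ Δ^n (m ≥ 0); (3) f has the right lifting property with respect to the inclusion d^n: Δ^{n-1} ↪ Δ^n (induced by the inclusion {0,…,n−1} ⊆ {0,…,n}) for every n ≥ 1. -/
universe u v w t

namespace Ctx
open SComplex

/-!
(1) ⇒ (2): in a lifting square against an injection of simplices `g`, local surjectivity
yields a simplex of `Γ` containing the image of `u` and lying over the image of `v`; extending
`u` along `g` into that simplex gives the lift.

(3) ⇒ (1): enumerate a simplex `γ` by `Δ^n` and send the extra vertex of `Δ^(n+1)` to a vertex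
`w` of `τ`; a lift against `Δ^n ↪ Δ^(n+1)` is a simplex in the star of `γ` whose image gains
`w`. Adding the vertices of `τ` one at a time gives a simplex over `τ`.
-/

namespace SComplex

variable {V : Type u} {W : Type v} {A : Type*} {B : Type*}
  {Γ : SComplex V} {K : SComplex W} {CA : SComplex A} {CB : SComplex B}

theorem deltaC_univ_mem (n : ℕ) : Set.univ ∈ (deltaC n).faces := Set.univ_nonempty

def Map.ofMemFace (h : B → V) {γ : Set V} (hγ : γ ∈ Γ.faces) (hh : ∀ b, h b ∈ γ) :
    Map CB Γ :=
  ⟨h, fun σ hσ => Γ.down_closed hγ (by rintro _ ⟨b, -, rfl⟩; exact hh b)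
    ((CB.nonempty_mem σ hσ).image h)⟩

theorem Map.LocSurj.rlp_of_injective {f : Map Γ K} (hf : f.LocSurj) {g : Map CA CB}
    (hg : Function.Injective g.toFun) (hA : Set.univ ∈ CA.faces) (hB : Set.univ ∈ CB.faces) :
    RLP g f := by
  intro u v huv
  have hcomm : ∀ a, f.toFun (u.toFun a) = v.toFun (g.toFun a) :=
    congrFun (congrArg Map.toFun huv)
  have hsub : f.toFun '' Set.range u.toFun ⊆ Set.range v.toFun := by
    rintro _ ⟨_, ⟨a, rfl⟩, rfl⟩
    exact ⟨g.toFun a, (hcomm a).symm⟩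
  obtain ⟨γ', ⟨hγ', hγγ'⟩, hfγ'⟩ := hf _ (Set.image_univ ▸ u.map_faces hA)
    _ ⟨Set.image_univ ▸ v.map_faces hB, hsub⟩
  have hlift : ∀ b, ∃ y ∈ γ', f.toFun y = v.toFun b := fun b =>
    (hfγ'.symm ▸ Set.mem_range_self b : v.toFun b ∈ f.toFun '' γ')
  choose e he hfe using hlift
  let lift := Function.extend g.toFun u.toFun e
  have hg_apply : ∀ a, lift (g.toFun a) = u.toFun a := hg.extend_apply u.toFun e
  have hlift_apply : ∀ b, lift b ∈ γ' ∧ f.toFun (lift b) = v.toFun b := by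
    intro b
    by_cases hb : ∃ a, g.toFun a = b
    · obtain ⟨a, rfl⟩ := hb
      rw [hg_apply, hcomm]
      exact ⟨hγγ' (Set.mem_range_self a), rfl⟩
    · have he' : lift b = e b := Function.extend_apply' _ _ _ hb
      rw [he']
      exact ⟨he b, hfe b⟩
  exact ⟨Map.ofMemFace lift hγ' (hlift_apply · |>.1), Map.ext (funext hg_apply),
    Map.ext (funext (hlift_apply · |>.2))⟩

theorem exists_fin_succ_range_eq {s : Set V} (hfin : s.Finite) (hne : s.Nonempty) :
    ∃ (n : ℕ) (a : Fin (n + 1) → V), Set.range a = s := by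
  obtain ⟨_ | n, a, -, ha⟩ := hfin.fin_param
  · exact absurd (ha ▸ hne) (by simp)
  · exact ⟨n, a, ha⟩

theorem exists_mem_star_image_eq_insert {f : Map Γ K}
    (hR : ∀ n : ℕ, RLP (deltaMap (Fin.castSucc : Fin (n + 1) → Fin (n + 2))) f)
    {γ : Set V} (hγ : γ ∈ Γ.faces) {w : W} (hw : insert w (f.toFun '' γ) ∈ K.faces) :
    ∃ γ' ∈ Γ.star γ, f.toFun '' γ' = insert w (f.toFun '' γ) := by
  obtain ⟨n, a, rfl⟩ := exists_fin_succ_range_eq (Γ.finite_mem γ hγ) (Γ.nonempty_mem γ hγ)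
  let vf : Fin (n + 2) → W := Fin.snoc (α := fun _ => W) (f.toFun ∘ a) w
  have hvf : Set.range vf = insert w (f.toFun '' Set.range a) := by
    rw [Fin.range_snoc, Set.range_comp]
  let u : Map (deltaC n) Γ := Map.ofMemFace a hγ Set.mem_range_self
  let v : Map (deltaC (n + 1)) K := Map.ofMemFace vf hw (hvf ▸ Set.mem_range_self ·)
  have huv : f.comp u = v.comp (deltaMap Fin.castSucc) :=
    Map.ext (funext fun i => (Fin.snoc_castSucc (α := fun _ => W) ..).symm)
  obtain ⟨h, hhu, hhv⟩ := hR n u v huv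
  refine ⟨Set.range h.toFun, ⟨Set.image_univ ▸ h.map_faces (deltaC_univ_mem _), ?_⟩, ?_⟩
  · rintro _ ⟨i, rfl⟩
    exact ⟨i.castSucc, congrFun (congrArg Map.toFun hhu) i⟩
  · rw [← Set.range_comp, ← hvf]
    exact congrArg (Set.range ∘ Map.toFun) hhv

theorem locSurj_of_rlp_castSucc {f : Map Γ K}
    (hR : ∀ n : ℕ, RLP (deltaMap (Fin.castSucc : Fin (n + 1) → Fin (n + 2))) f) :
    f.LocSurj := by
  rintro γ hγ τ ⟨hτ, hγτ⟩
  suffices key : ∀ S ⊆ τ, S.Finite → ∃ γ' ∈ Γ.star γ, f.toFun '' γ' = f.toFun '' γ ∪ S by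
    simpa [Set.union_eq_self_of_subset_left hγτ] using key τ subset_rfl (K.finite_mem τ hτ)
  intro S hSτ hS
  induction S, hS using Set.Finite.induction_on with
  | empty => exact ⟨γ, ⟨hγ, subset_rfl⟩, (Set.union_empty _).symm⟩
  | @insert x S _ _ ih =>
    obtain ⟨γ', ⟨hγ', hγγ'⟩, hfγ'⟩ := ih ((Set.subset_insert x S).trans hSτ)
    have hins : insert x (f.toFun '' γ') ∈ K.faces :=
      K.down_closed hτ (hfγ' ▸ Set.insert_subset (hSτ (Set.mem_insert x S))
        (Set.union_subset hγτ ((Set.subset_insert x S).trans hSτ))) (Set.insert_nonempty _ _)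
    obtain ⟨γ'', ⟨hγ'', hγ'γ''⟩, hfγ''⟩ := exists_mem_star_image_eq_insert hR hγ' hins
    refine ⟨γ'', ⟨hγ'', hγγ'.trans hγ'γ''⟩, ?_⟩
    rw [hfγ'', hfγ', Set.union_insert]

end SComplex

/-- characterizations of local surjectivity by right lifting
properties. -/
theorem statement_4 {V : Type u} {W : Type v} {Γ : SComplex V} {K : SComplex W}
    (f : Map Γ K) :
    (f.LocSurj ↔ ∀ (m n : ℕ) (g : Map (deltaC m) (deltaC n)),
        Function.Injective g.toFun → RLP g f) ∧
    (f.LocSurj ↔ ∀ n : ℕ, RLP (deltaMap (Fin.castSucc : Fin (n + 1) → Fin (n + 2))) f) := by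
  have h12 : f.LocSurj → ∀ (m n : ℕ) (g : Map (deltaC m) (deltaC n)),
      Function.Injective g.toFun → RLP g f := fun hf _ _ _ hg =>
    hf.rlp_of_injective hg (deltaC_univ_mem _) (deltaC_univ_mem _)
  have h23 : (∀ (m n : ℕ) (g : Map (deltaC m) (deltaC n)),
      Function.Injective g.toFun → RLP g f) →
      ∀ n : ℕ, RLP (deltaMap (Fin.castSucc : Fin (n + 1) → Fin (n + 2))) f :=
    fun h n => h n (n + 1) _ (Fin.castSucc_injective _)
  exact ⟨⟨h12, locSurj_of_rlp_castSucc ∘ h23⟩, ⟨h23 ∘ h12, locSurj_of_rlp_castSucc⟩⟩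

end Ctx
end

section
/- For a simplicial complex map f: Γ → Σ, the following are equivalent: (1) f is discrete over vertices; (2) f has the right lifting property with respect to every surjective simplicial complex map Δ^n ↠ Δ^m (m ≥ 0); (3) f has the right lifting property with respect to the map s^0: Δ^1 ↠ Δ^0 (induced by the constant map {0,1} → {0}). -/
universe u v w t

/-!
Given a lifting problem `f ∘ u = v ∘ g` with `g : Δ^n ↠ B` surjective on vertices, pick any
set-theoretic section `s` of `g`. Since every nonempty set of vertices of `Δ^n` is a simplex,
`h := u ∘ s` is simplicial and `f ∘ h = v`. For `h ∘ g = u`: the vertices `u (s (g x))` and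
`u x` span a simplex of `Γ` and have the same image `v (g x)` under `f`, so they coincide when
`f` is discrete over vertices. Conversely, an edge `{x, y}` with `x ≠ y` collapsed by `f` is a
map `Δ^1 → Γ` over the constant map `Δ^0 → K`; a lift through `s^0 : Δ^1 → Δ^0` would give
`x = h 0 = y`.
-/

namespace Ctx.SComplex

variable {V : Type u} {W : Type v} {B : Type w} {Γ : SComplex V} {K : SComplex W}

theorem Map.DiscV.eq_of_pair_mem {f : Map Γ K} (hf : f.DiscV) {x y : V}
    (hxy : ({x, y} : Set V) ∈ Γ.faces) (h : f.toFun x = f.toFun y) : x = y := by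
  by_contra hne
  exact hf x y hne h hxy

def toDeltaC {CB : SComplex B} {n : ℕ} (s : B → Fin (n + 1)) : Map CB (deltaC n) :=
  ⟨s, fun σ hσ => (CB.nonempty_mem σ hσ).image s⟩

def Map.const (Γ : SComplex V) (w : W) : Map Γ K :=
  ⟨fun _ => w, fun σ hσ => by
    rw [(Γ.nonempty_mem σ hσ).image_const]
    exact K.singleton_mem w⟩

def edgeMap {x y : V} (hxy : ({x, y} : Set V) ∈ Γ.faces) : Map (deltaC 1) Γ :=
  ⟨![x, y], fun σ hσ => Γ.down_closed hxy (by
    rintro _ ⟨i, -, rfl⟩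
    fin_cases i <;> simp) (hσ.image _)⟩

theorem Map.DiscV.rlp_of_surjective {CB : SComplex B} {n : ℕ} {f : Map Γ K} (hf : f.DiscV)
    (g : Map (deltaC n) CB) (hg : Function.Surjective g.toFun) : RLP g f := by
  intro u v huv
  have hfu : ∀ x, f.toFun (u.toFun x) = v.toFun (g.toFun x) :=
    congrFun (congrArg Map.toFun huv)
  let s := Function.surjInv hg
  have hgs : ∀ y, g.toFun (s y) = y := Function.surjInv_eq hg
  refine ⟨u.comp (toDeltaC s), ?_, ?_⟩
  · ext x
    change u.toFun (s (g.toFun x)) = u.toFun x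
    refine hf.eq_of_pair_mem ?_ (by rw [hfu, hfu, hgs])
    rw [← Set.image_pair]
    exact u.map_faces (Set.insert_nonempty _ _)
  · ext y
    change f.toFun (u.toFun (s y)) = v.toFun y
    exact (hfu (s y)).trans (congrArg v.toFun (hgs y))

theorem Map.DiscV.of_rlp_deltaMap_const {f : Map Γ K}
    (hf : RLP (deltaMap fun _ : Fin 2 => (0 : Fin 1)) f) : f.DiscV := by
  intro x y hne hfxy hxy
  obtain ⟨h, hhu, -⟩ := hf (edgeMap hxy) (Map.const _ (f.toFun x)) <| by
    ext i
    fin_cases i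
    exacts [rfl, hfxy.symm]
  have hu : ∀ i, h.toFun 0 = ![x, y] i := fun i => congrFun (congrArg Map.toFun hhu) i
  exact hne ((hu 0).symm.trans (hu 1))

end Ctx.SComplex

namespace Ctx
open SComplex

/-- characterizations of discreteness over vertices by right
lifting properties. -/
theorem statement_5 {V : Type u} {W : Type v} {Γ : SComplex V} {K : SComplex W}
    (f : Map Γ K) :
    (f.DiscV ↔ ∀ (m n : ℕ) (g : Map (deltaC n) (deltaC m)),
        Function.Surjective g.toFun → RLP g f) ∧
    (f.DiscV ↔ RLP (deltaMap (fun _ : Fin 2 => (0 : Fin 1))) f) := by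
  have hs₀ : Function.Surjective (deltaMap fun _ : Fin 2 => (0 : Fin 1)).toFun :=
    fun y => ⟨0, (Fin.fin_one_eq_zero y).symm⟩
  exact ⟨⟨fun hf _ _ g hg => hf.rlp_of_surjective g hg,
      fun h => Map.DiscV.of_rlp_deltaMap_const (h 0 1 _ hs₀)⟩,
    ⟨fun hf => hf.rlp_of_surjective _ hs₀, Map.DiscV.of_rlp_deltaMap_const⟩⟩

end Ctx
end

section
/- A simplicial complex map f: Γ → Σ is a bundle scenario if and only if f has the right lifting property with respect to Δθ: Δ^m → Δ^n for every order-preserving map θ: {0,…,m} → {0,…,n} and with respect to the inclusion of the empty simplicial complex into Δ^n for every n ≥ 0 (i.e., with respect to the image under Δ of every morphism of the augmented simplex category Δ₊). -/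
universe u v w t

/-! A map `Δ^n → K` is a simplex of `K` together with an enumeration of its vertices
by `{0, …, n}`. Lifting against `∅ → Δ^n` therefore asks for a simplex of `Γ` over each simplex
of `K`, which is surjectivity. Lifting against `Δθ` asks to enlarge the simplex `γ = u(Δ^m)` of
`Γ` to one lying over the simplex `v(Δ^n)` of the star of `f(γ)`: local surjectivity provides it,
and since `f` is injective on simplices when it is discrete over vertices, the lift automatically
restricts to `u`. Conversely, the codiagonal `Δ^1 → Δ^0` detects edges in a fibre, and
reordering the vertices of `Δ^m` turns any inclusion into a star into a monotone `Δθ`. -/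

namespace Ctx
open SComplex

namespace SComplex

variable {V : Type u} {W : Type v} {Γ : SComplex V} {K : SComplex W} {f : Map Γ K}

lemma univ_mem_deltaC (n : ℕ) : (Set.univ : Set (Fin (n + 1))) ∈ (deltaC n).faces :=
  Set.univ_nonempty

lemma Map.range_mem_faces {n : ℕ} (v : Map (deltaC n) K) : Set.range v.toFun ∈ K.faces := by
  simpa only [Set.image_univ] using v.map_faces (univ_mem_deltaC n)

def Map.ofRangeSubset {n : ℕ} (g : Fin (n + 1) → V) {γ : Set V} (hγ : γ ∈ Γ.faces)
    (hg : Set.range g ⊆ γ) : Map (deltaC n) Γ :=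
  ⟨g, fun _ hσ => Γ.down_closed hγ ((Set.image_subset_range _ _).trans hg) (hσ.image g)⟩

lemma exists_map_deltaC_range_eq {σ : Set V} (hσ : σ ∈ Γ.faces) :
    ∃ (m : ℕ) (u : Map (deltaC m) Γ), Set.range u.toFun = σ := by
  obtain ⟨k, g, hg⟩ := (Γ.finite_mem σ hσ).fin_embedding
  cases k with
  | zero => exact absurd (hg.symm.trans (Set.range_eq_empty _)) (Γ.nonempty_mem σ hσ).ne_empty
  | succ m => exact ⟨m, Map.ofRangeSubset g hσ hg.le, hg⟩

lemma exists_lift_of_range_subset_image {n : ℕ} (v : Map (deltaC n) K) {γ : Set V}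
    (hγ : γ ∈ Γ.faces) (hv : Set.range v.toFun ⊆ f.toFun '' γ) :
    ∃ h : Map (deltaC n) Γ, f.comp h = v ∧ Set.range h.toFun ⊆ γ := by
  choose g hgγ hfg using fun i => hv ⟨i, rfl⟩
  have hg : Set.range g ⊆ γ := Set.range_subset_iff.2 hgγ
  exact ⟨Map.ofRangeSubset g hγ hg, Map.ext (funext hfg), hg⟩

instance : Subsingleton (Map emptyC Γ) :=
  ⟨fun _ _ => Map.ext (funext fun x => x.elim)⟩

lemma rlp_emptyToDelta_iff {n : ℕ} :
    RLP (emptyToDelta n) f ↔ ∀ v : Map (deltaC n) K, ∃ h, f.comp h = v := by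
  refine ⟨fun hf v => ?_, fun hf u v _ => ?_⟩
  · obtain ⟨h, -, hfh⟩ := hf ⟨fun x => x.elim, fun _ h => h.elim⟩ v (Subsingleton.elim _ _)
    exact ⟨h, hfh⟩
  · obtain ⟨h, hfh⟩ := hf v
    exact ⟨h, Subsingleton.elim _ _, hfh⟩

theorem Map.surj_iff_forall_rlp_emptyToDelta : f.Surj ↔ ∀ n, RLP (emptyToDelta n) f := by
  simp only [rlp_emptyToDelta_iff]
  constructor
  · intro hS n v
    obtain ⟨γ, hγ, hfγ⟩ := hS _ v.range_mem_faces
    obtain ⟨h, hfh, -⟩ := exists_lift_of_range_subset_image v hγ hfγ.ge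
    exact ⟨h, hfh⟩
  · intro hE σ hσ
    obtain ⟨m, v, rfl⟩ := exists_map_deltaC_range_eq hσ
    obtain ⟨h, rfl⟩ := hE m v
    exact ⟨_, h.range_mem_faces, (Set.range_comp _ _).symm⟩

lemma Map.DiscV.injOn (hD : f.DiscV) {γ : Set V} (hγ : γ ∈ Γ.faces) :
    Set.InjOn f.toFun γ := by
  intro x hx y hy hxy
  by_contra hne
  exact hD x y hne hxy <| Γ.down_closed hγ
    (Set.insert_subset hx (Set.singleton_subset_iff.2 hy)) (Set.insert_nonempty _ _)

lemma Map.rlp_deltaMap_of_locSurj_of_discV (hL : f.LocSurj) (hD : f.DiscV) {m n : ℕ}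
    (θ : Fin (m + 1) → Fin (n + 1)) : RLP (deltaMap θ) f := by
  intro u v huv
  have hfu : f.toFun ∘ u.toFun = v.toFun ∘ θ := congrArg Map.toFun huv
  have hstar : Set.range v.toFun ∈ K.star (f.toFun '' Set.range u.toFun) := by
    refine ⟨v.range_mem_faces, ?_⟩
    rw [← Set.range_comp, hfu]
    exact Set.range_comp_subset_range _ _
  obtain ⟨γ', ⟨hγ', hγγ'⟩, hfγ'⟩ := hL _ u.range_mem_faces _ hstar
  obtain ⟨h, hfh, hhγ'⟩ := exists_lift_of_range_subset_image v hγ' hfγ'.ge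
  refine ⟨h, Map.ext (funext fun i => ?_), hfh⟩
  have hfhu : f.toFun (h.toFun (θ i)) = f.toFun (u.toFun i) :=
    (congrFun (congrArg Map.toFun hfh) (θ i)).trans (congrFun hfu i).symm
  exact hD.injOn hγ' (hhγ' ⟨θ i, rfl⟩) (hγγ' ⟨i, rfl⟩) hfhu

lemma Map.discV_of_rlp_deltaMap_const (hf : RLP (deltaMap fun _ : Fin 2 => (0 : Fin 1)) f) :
    f.DiscV := by
  intro x y hne hfxy hxy
  let u : Map (deltaC 1) Γ :=
    Map.ofRangeSubset ![x, y] hxy (Set.range_subset_iff.2 fun i => by fin_cases i <;> simp)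
  let v : Map (deltaC 0) K :=
    Map.ofRangeSubset (fun _ => f.toFun x) (K.singleton_mem _) (Set.range_subset_iff.2 fun _ => rfl)
  have hfu : f.comp u = v.comp (deltaMap fun _ => 0) :=
    Map.ext (funext fun i => show f.toFun (![x, y] i) = f.toFun x by fin_cases i <;> simp [hfxy])
  obtain ⟨h, hhu, -⟩ := hf u v hfu
  have hhx : h.toFun 0 = x := congrFun (congrArg Map.toFun hhu) 0
  have hhy : h.toFun 0 = y := congrFun (congrArg Map.toFun hhu) 1
  exact hne (hhx.symm.trans hhy)

lemma Map.locSurj_of_rlp_deltaMap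
    (hf : ∀ (m n : ℕ) (θ : Fin (m + 1) → Fin (n + 1)), Monotone θ → RLP (deltaMap θ) f) :
    f.LocSurj := by
  rintro γ hγ τ ⟨hτ, hγτ⟩
  obtain ⟨m, u, rfl⟩ := exists_map_deltaC_range_eq hγ
  obtain ⟨n, v, rfl⟩ := exists_map_deltaC_range_eq hτ
  choose φ hφ using fun i => hγτ ⟨u.toFun i, ⟨i, rfl⟩, rfl⟩
  set π := Tuple.sort φ
  obtain ⟨h, hhu, hfh⟩ := hf m n (φ ∘ π) (Tuple.monotone_sort φ) (u.comp (deltaMap π)) v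
    (Map.ext (funext fun i => (hφ (π i)).symm))
  refine ⟨Set.range h.toFun, ⟨h.range_mem_faces, ?_⟩, ?_⟩
  · calc Set.range u.toFun = Set.range (u.toFun ∘ π) := (π.surjective.range_comp _).symm
      _ = Set.range (h.toFun ∘ (φ ∘ π)) := congrArg Set.range (congrArg Map.toFun hhu).symm
      _ ⊆ Set.range h.toFun := Set.range_comp_subset_range _ _
  · rw [← Set.range_comp]
    exact congrArg Set.range (congrArg Map.toFun hfh)

end SComplex

/-- bundle scenarios are exactly the maps with the right lifting
property against the image under `Δ` of every morphism of the augmented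
simplex category. -/
theorem statement_6 {V : Type u} {W : Type v} {Γ : SComplex V} {K : SComplex W}
    (f : Map Γ K) :
    f.IsBundle ↔
      ((∀ (m n : ℕ) (θ : Fin (m + 1) → Fin (n + 1)), Monotone θ → RLP (deltaMap θ) f) ∧
       (∀ n : ℕ, RLP (emptyToDelta n) f)) := by
  rw [← Map.surj_iff_forall_rlp_emptyToDelta]
  constructor
  · rintro ⟨hS, hL, hD⟩
    exact ⟨fun m n θ _ => Map.rlp_deltaMap_of_locSurj_of_discV hL hD θ, hS⟩
  · rintro ⟨hθ, hS⟩
    exact ⟨hS, Map.locSurj_of_rlp_deltaMap hθ,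
      Map.discV_of_rlp_deltaMap_const (hθ 1 0 _ monotone_const)⟩

end Ctx
end

section
/- Let f: Γ → Σ be a simplicial complex map that is discrete over vertices. Then the commutative square formed by δ_Γ: Γ → ĤNΓ, δ_Σ: Σ → ĤNΣ, f, and ĤNf is a pullback: for every simplicial complex Θ and simplicial complex maps u: Θ → ĤNΓ and v: Θ → Σ with ĤNf ∘ u = δ_Σ ∘ v, there exists a unique simplicial complex map w: Θ → Γ with δ_Γ ∘ w = u and f ∘ w = v. -/
universe u v w t

namespace Ctx
open SComplex

/-!
Discreteness over vertices makes `f` injective on every simplex of `Γ`, so a simplex `u t`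
with `f(u t) = {v t}` is a singleton: `u` factors through `δ_Γ`. Since `δ` is injective on
vertices, maps into `Γ` (or `Σ`) are determined by their composites with `δ`, which gives
both `f ∘ w = v` (by naturality of `δ`) and uniqueness.
-/

namespace SComplex

variable {V : Type u} {W : Type v} {T : Type t} {V' : Type w}
  {Γ : SComplex V} {K : SComplex W} {Θ : SComplex T}

theorem Map.comp_assoc {L : SComplex V'} (h : Map K L) (g : Map Γ K) (f : Map Θ Γ) :
    (h.comp g).comp f = h.comp (g.comp f) :=
  rfl

theorem Map.DiscV.injOn_s7 {f : Map Γ K} (hf : f.DiscV) {σ : Set V} (hσ : σ ∈ Γ.faces) :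
    Set.InjOn f.toFun σ := by
  intro x hx y hy hxy
  by_contra hne
  refine hf x y hne hxy (Γ.down_closed hσ ?_ (Set.insert_nonempty x {y}))
  rintro z (rfl | rfl) <;> assumption

theorem Map.DiscV.exists_eq_singleton {f : Map Γ K} (hf : f.DiscV) {σ : Set V}
    (hσ : σ ∈ Γ.faces) {y : W} (hy : f.toFun '' σ = {y}) : ∃ x, σ = {x} := by
  obtain ⟨x, hx⟩ := Γ.nonempty_mem σ hσ
  have hfy : ∀ z ∈ σ, f.toFun z = y := fun z hz =>
    Set.mem_singleton_iff.mp (hy ▸ Set.mem_image_of_mem f.toFun hz)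
  exact ⟨x, Set.eq_singleton_iff_unique_mem.mpr
    ⟨hx, fun z hz => hf.injOn_s7 hσ hz hx ((hfy z hz).trans (hfy x hx).symm)⟩⟩

theorem nerveMap_comp_deltaHat (f : Map Γ K) :
    (nerveMap f).comp (deltaHat Γ) = (deltaHat K).comp f :=
  Map.ext (funext fun x => Subtype.ext (Set.image_singleton (f := f.toFun) (a := x)))

theorem deltaHat_comp_injective :
    Function.Injective fun w : Map Θ Γ => (deltaHat Γ).comp w := by
  intro w w' h
  ext t
  exact Set.singleton_eq_singleton_iff.mp (congrArg (fun m => (Map.toFun m t).1) h)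

theorem exists_deltaHat_comp_eq (u : Map Θ (nerveC Γ))
    (hu : ∀ t, ∃ x, (u.toFun t).1 = {x}) : ∃ w : Map Θ Γ, (deltaHat Γ).comp w = u := by
  choose w hw using hu
  have himage : ∀ σ : Set T, (⋃ γ ∈ u.toFun '' σ, (γ : Set V)) = w '' σ := by
    intro σ
    rw [Set.biUnion_image, Set.image_eq_iUnion]
    simp only [hw]
  refine ⟨⟨w, fun σ hσ => himage σ ▸ (u.map_faces hσ).2.2⟩, ?_⟩
  exact Map.ext (funext fun t => Subtype.ext (hw t).symm)

end SComplex

/-- for `f` discrete over vertices, the naturality square of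
`δ : id → ĤN` at `f` is a pull-back. -/
theorem statement_7 {V : Type u} {W : Type v} {T : Type t}
    {Γ : SComplex V} {K : SComplex W} (f : Map Γ K) (hf : f.DiscV)
    (Θc : SComplex T) (u : Map Θc (nerveC Γ)) (vm : Map Θc K)
    (hcomm : (nerveMap f).comp u = (deltaHat K).comp vm) :
    ∃! w : Map Θc Γ, (deltaHat Γ).comp w = u ∧ f.comp w = vm := by
  have hsingleton : ∀ t, ∃ x, (u.toFun t).1 = {x} := fun t =>
    hf.exists_eq_singleton (u.toFun t).2 (congrArg (fun m => (Map.toFun m t).1) hcomm)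
  obtain ⟨w, hw⟩ := exists_deltaHat_comp_eq u hsingleton
  have hfw : (deltaHat K).comp (f.comp w) = (deltaHat K).comp vm := by
    rw [← Map.comp_assoc, ← nerveMap_comp_deltaHat, Map.comp_assoc, hw, hcomm]
  exact ⟨w, ⟨hw, deltaHat_comp_injective hfw⟩,
    fun w' hw' => deltaHat_comp_injective (hw'.1.trans hw.symm)⟩

end Ctx
end
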